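/- Let X be the 5-element poset {a, b, c, g, h} with a < c, b < c, c < g, c < h. The degree sequence of the 1-skeleton of the order polytope O(X) is (6,6,6,6,6,6,6,6) and the degree sequence of the 1-skeleton of the chain polytope C(X) is (5,6,6,6,6,6,6,7). -/

import Mathlib

/-! All objects are finite, so the degree sequences are a computation. Connectivity of a finite
set `S` in `P` becomes decidable through the criterion that every nonempty proper part `T ⊂ S`
contains an element comparable to some element of `S \ T`. Indexing ideals and antichains by
finsets instead of sets gives isomorphic skeletons, on which the degrees are evaluated by
`decide`. -/

/-- Indicator vector of a subset `W` of `P` in `ℝ^P`. -/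
noncomputable def rho {P : Type*} (W : Set P) : P → ℝ := W.indicator fun _ => 1

/-- The order polytope of a finite poset `P`. -/
def orderPolytope (P : Type*) [Fintype P] [PartialOrder P] : Set (P → ℝ) :=
  {f | (∀ i, 0 ≤ f i ∧ f i ≤ 1) ∧ ∀ i j : P, i ≤ j → f j ≤ f i}

/-- The chain polytope of a finite poset `P`. -/
def chainPolytope (P : Type*) [Fintype P] [PartialOrder P] : Set (P → ℝ) :=
  {f | (∀ i, 0 ≤ f i) ∧ ∀ C : Finset P, IsMaxChain (· ≤ ·) (C : Set P) → ∑ i ∈ C, f i ≤ 1}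

/-- A subset `S` of a poset `P` is connected in `P` if any two of its elements are
joined by a sequence within `S` whose consecutive members are comparable in `P`. -/
def ConnIn {P : Type*} [PartialOrder P] (S : Set P) : Prop :=
  ∀ x ∈ S, ∀ y ∈ S,
    Relation.ReflTransGen (fun u v => u ∈ S ∧ v ∈ S ∧ (u ≤ v ∨ v ≤ u)) x y

/-- The segment joining `u` and `v` is an edge (one-dimensional face) of `S`. -/
def IsEdgeOf {E : Type*} [AddCommGroup E] [Module ℝ E] (S : Set E) (u v : E) : Prop :=
  u ≠ v ∧ IsExtreme ℝ S (segment ℝ u v)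

/-- The set of maximal elements of a subset of a poset. -/
def maxSet {P : Type*} [PartialOrder P] (S : Set P) : Set P :=
  {x | x ∈ S ∧ ∀ y ∈ S, x ≤ y → x = y}

/-- The set of minimal elements of a subset of a poset. -/
def minSet {P : Type*} [PartialOrder P] (S : Set P) : Set P :=
  {x | x ∈ S ∧ ∀ y ∈ S, y ≤ x → x = y}

/-- The 1-skeleton of the order polytope, combinatorially: vertices are poset
ideals, adjacency is proper inclusion with connected difference. -/
def orderSkeleton (P : Type*) [PartialOrder P] :
    SimpleGraph {I : Set P // IsLowerSet I} :=
  SimpleGraph.fromRel fun I J => I.1 ⊂ J.1 ∧ ConnIn (J.1 \ I.1)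

/-- The 1-skeleton of the chain polytope, combinatorially: vertices are antichains,
adjacency is connectedness of the symmetric difference. -/
def chainSkeleton (P : Type*) [PartialOrder P] :
    SimpleGraph {A : Set P // IsAntichain (· ≤ ·) A} :=
  SimpleGraph.fromRel fun A B => ConnIn ((A.1 \ B.1) ∪ (B.1 \ A.1))

/-- The multiset of vertex degrees of a graph (the degree sequence, up to order). -/
noncomputable def degMultiset {V : Type*} [Fintype V] (G : SimpleGraph V) : Multiset ℕ :=
  Finset.univ.val.map fun v => (G.neighborSet v).ncard

/-- `P` contains the poset `X = {a,b,c,g,h}` with `a<c, b<c, c<g, c<h` as a subposet. -/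
def ContainsX (P : Type*) [PartialOrder P] : Prop :=
  ∃ a b c g h : P, a < c ∧ b < c ∧ c < g ∧ c < h ∧
    ¬ a ≤ b ∧ ¬ b ≤ a ∧ ¬ g ≤ h ∧ ¬ h ≤ g

/-- The pair `(I, J)` of poset ideals with `I ⊂ J` and `J \ I` connected in `P`. -/
def OmegaP {P : Type*} [PartialOrder P] (I J : Set P) : Prop :=
  IsLowerSet I ∧ IsLowerSet J ∧ I ⊂ J ∧ ConnIn (J \ I)

/-- The pair `(A, B)` of distinct antichains with connected symmetric difference. -/
def PsiP {P : Type*} [PartialOrder P] (A B : Set P) : Prop :=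
  IsAntichain (· ≤ ·) A ∧ IsAntichain (· ≤ ·) B ∧ A ≠ B ∧ ConnIn ((A \ B) ∪ (B \ A))

/-- First component of the map `Ω → Ψ`: `A = max J`. -/
def FmapA {P : Type*} [PartialOrder P] (_I J : Set P) : Set P := maxSet J

/-- Second component of the map `Ω → Ψ`:
`B = min(J \ I) ∪ (max I ∩ max J)`, with `min(J \ I) := ∅` when `|J \ I| = 1`. -/
def FmapB {P : Type*} [PartialOrder P] (I J : Set P) : Set P :=
  (if (J \ I).ncard = 1 then ∅ else minSet (J \ I)) ∪ (maxSet I ∩ maxSet J)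

noncomputable instance {P : Type*} [Fintype P] [PartialOrder P] :
    Fintype {I : Set P // IsLowerSet I} := Fintype.ofFinite _

noncomputable instance {P : Type*} [Fintype P] [PartialOrder P] :
    Fintype {A : Set P // IsAntichain (· ≤ ·) A} := Fintype.ofFinite _

/-- The five-element poset `X = {a,b,c,g,h}` with `a<c, b<c, c<g, c<h`. -/
inductive XP | a | b | c | g | h
deriving DecidableEq

instance : Fintype XP :=
  ⟨{XP.a, XP.b, XP.c, XP.g, XP.h}, fun x => by cases x <;> decide⟩

/-- The order relation of `X`. -/
def XP.leB : XP → XP → Bool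
  | .a, .a => true | .a, .c => true | .a, .g => true | .a, .h => true
  | .b, .b => true | .b, .c => true | .b, .g => true | .b, .h => true
  | .c, .c => true | .c, .g => true | .c, .h => true
  | .g, .g => true | .h, .h => true
  | _, _ => false

instance : LE XP := ⟨fun x y => XP.leB x y = true⟩

instance : DecidableRel (· ≤ · : XP → XP → Prop) :=
  fun x y => inferInstanceAs (Decidable (XP.leB x y = true))

instance : PartialOrder XP where
  le_refl := by decide
  le_trans := by decide
  le_antisymm := by decide

open Finset

section Connectivity

variable {P : Type*} [PartialOrder P] [DecidableEq P]

theorem connIn_coe_iff {s : Finset P} :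
    ConnIn (s : Set P) ↔ ∀ t ∈ s.ssubsets, t.Nonempty → ∃ u ∈ t, ∃ v ∈ s \ t, u ≤ v ∨ v ≤ u := by
  constructor
  · intro hconn t ht ⟨x, hxt⟩
    rw [mem_ssubsets] at ht
    obtain ⟨y, hys, hyt⟩ := exists_of_ssubset ht
    by_contra hsep
    have reach_mem : ∀ w, Relation.ReflTransGen
        (fun u v => u ∈ (s : Set P) ∧ v ∈ (s : Set P) ∧ (u ≤ v ∨ v ≤ u)) x w → w ∈ t := by
      intro w hw
      induction hw with
      | refl => exact hxt
      | tail _ hstep hmem =>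
        by_contra hwt
        exact hsep ⟨_, hmem, _, mem_sdiff.2 ⟨hstep.2.1, hwt⟩, hstep.2.2⟩
    exact hyt (reach_mem y (hconn x (ht.1 hxt) y hys))
  · intro hsplit x hx y hy
    by_contra hxy
    classical
    -- the points reachable from `x` would form a separated part
    obtain ⟨u, hu, v, hv, huv⟩ :=
      hsplit (s.filter (Relation.ReflTransGen _ x ·))
        (mem_ssubsets.2 (filter_ssubset.2 ⟨y, hy, hxy⟩)) ⟨x, mem_filter.2 ⟨hx, .refl⟩⟩
    rw [mem_filter] at hu
    rw [mem_sdiff, mem_filter] at hv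
    exact hv.2 ⟨hv.1, hu.2.tail ⟨hu.1, hv.1, huv⟩⟩

variable [DecidableLE P]

instance (s : Finset P) : Decidable (ConnIn (s : Set P)) :=
  decidable_of_iff _ connIn_coe_iff.symm

instance (s : Finset P) : Decidable (IsAntichain (· ≤ ·) (s : Set P)) :=
  decidable_of_iff (∀ u ∈ s, ∀ v ∈ s, u ≠ v → ¬ u ≤ v) Iff.rfl

instance [Fintype P] (s : Finset P) : Decidable (IsLowerSet (s : Set P)) :=
  decidable_of_iff (∀ u ∈ s, ∀ v, v ≤ u → v ∈ s) ⟨fun h _ _ hvu hu => h _ hu _ hvu,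
    fun h _ hu _ hvu => h hvu hu⟩

end Connectivity

section DegreeSequence

variable {V W : Type*} [Fintype V] [Fintype W]

theorem degMultiset_congr {G : SimpleGraph V} {G' : SimpleGraph W} (f : G ≃g G') :
    degMultiset G = degMultiset G' := by
  unfold degMultiset
  rw [← map_univ_equiv f.toEquiv, map_val, Multiset.map_map]
  congr 1
  funext v
  exact Nat.card_congr (f.mapNeighborSet v)

theorem degMultiset_eq_map_degree (G : SimpleGraph V) [DecidableRel G.Adj] :
    degMultiset G = univ.val.map fun v => G.degree v := by
  unfold degMultiset
  congr 1
  funext v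
  rw [Set.ncard_eq_toFinset_card', ← G.neighborFinset_def, G.card_neighborFinset_eq_degree]

end DegreeSequence

section FinsetSkeleton

variable (P : Type*) [PartialOrder P] [DecidableEq P]

def orderSkeletonFinset : SimpleGraph {I : Finset P // IsLowerSet (I : Set P)} :=
  SimpleGraph.fromRel fun I J => I.1 ⊂ J.1 ∧ ConnIn ((J.1 \ I.1 : Finset P) : Set P)

def chainSkeletonFinset : SimpleGraph {A : Finset P // IsAntichain (· ≤ ·) (A : Set P)} :=
  SimpleGraph.fromRel fun A B => ConnIn ((A.1 \ B.1 ∪ B.1 \ A.1 : Finset P) : Set P)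

instance [DecidableLE P] : DecidableRel (orderSkeletonFinset P).Adj := by
  unfold orderSkeletonFinset; infer_instance

instance [DecidableLE P] : DecidableRel (chainSkeletonFinset P).Adj := by
  unfold chainSkeletonFinset; infer_instance

variable [Fintype P]

noncomputable def orderSkeletonFinsetIso : orderSkeletonFinset P ≃g orderSkeleton P where
  toEquiv := Fintype.finsetEquivSet.subtypeEquiv fun _ => Iff.rfl
  map_rel_iff' := by
    intro I J
    unfold orderSkeletonFinset orderSkeleton
    simp only [SimpleGraph.fromRel_adj, ne_eq, Equiv.apply_eq_iff_eq, coe_sdiff]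
    rfl

noncomputable def chainSkeletonFinsetIso : chainSkeletonFinset P ≃g chainSkeleton P where
  toEquiv := Fintype.finsetEquivSet.subtypeEquiv fun _ => Iff.rfl
  map_rel_iff' := by
    intro A B
    unfold chainSkeletonFinset chainSkeleton
    simp only [SimpleGraph.fromRel_adj, ne_eq, Equiv.apply_eq_iff_eq, coe_sdiff, coe_union]
    rfl

end FinsetSkeleton

theorem stmt16 :
    degMultiset (orderSkeleton XP) = ({6, 6, 6, 6, 6, 6, 6, 6} : Multiset ℕ) ∧
    degMultiset (chainSkeleton XP) = ({5, 6, 6, 6, 6, 6, 6, 7} : Multiset ℕ) := by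
  rw [← degMultiset_congr (orderSkeletonFinsetIso XP),
    ← degMultiset_congr (chainSkeletonFinsetIso XP),
    degMultiset_eq_map_degree, degMultiset_eq_map_degree]
  decide
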